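/- For planar binary trees x of degree m and y of degree n, the map (a,b) ↦ a/b is an order isomorphism from the product of Tamari intervals [0̂, x] × [0̂, y] onto the Tamari interval [0̂, x/y] in the Tamari poset of degree m+n, where 0̂ denotes the minimum element (left comb). -/

import Mathlib

/-- Planar binary trees: a leaf `∘` or an ordered pair of planar binary trees. -/
inductive PBT : Type
  | leaf : PBT
  | node : PBT → PBT → PBT
deriving DecidableEq

namespace PBT

/-- The degree: the number of internal vertices. -/
def deg : PBT → ℕ
  | leaf => 0
  | node l r => deg l + deg r + 1

/-- The over product `x/y`: graft the root of `x` onto the leftmost leaf of `y`. -/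
def overProd (x : PBT) : PBT → PBT
  | leaf => x
  | node l r => node (overProd x l) r

/-- The under product `x\y`: graft the root of `y` onto the rightmost leaf of `x`. -/
def under : PBT → PBT → PBT
  | leaf, y => y
  | node l r, y => node l (under r y)

/-- Left-right reversal: swap the two subtrees at every internal vertex. -/
def rev : PBT → PBT
  | leaf => leaf
  | node l r => node (rev r) (rev l)

/-- `move x y` : `y` is obtained from `x` by one elementary Tamari move,
replacing a subtree `(a (b c))` by `((a b) c)` (a right rotation, going down). -/
inductive move : PBT → PBT → Prop
  | rot (a b c : PBT) : move (node a (node b c)) (node (node a b) c)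
  | left {a a' : PBT} (b : PBT) : move a a' → move (node a b) (node a' b)
  | right (a : PBT) {b b' : PBT} : move b b' → move (node a b) (node a b')

/-- The Tamari order: `x ≤ y` iff `x` is obtained from `y` by a sequence of
elementary moves. -/
def tle (x y : PBT) : Prop := Relation.ReflTransGen move y x

/-- The left comb of degree `n`. -/
def leftComb : ℕ → PBT
  | 0 => leaf
  | n+1 => node (leftComb n) leaf

/-- The right comb of degree `n`. -/
def rightComb : ℕ → PBT
  | 0 => leaf
  | n+1 => node leaf (rightComb n)

end PBT

/-!
A move applied to `a/b` takes place either inside `a`, or at a node of `b` (possibly on the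
left spine of `b`, where `a` is grafted): a rotation `(p (q s)) ↦ ((p q) s)` never has `a` inside
`q` or `s`, so on the left spine it is the same rotation of `b` with `a` carried along in `p`.
Hence every tree below `a/b` is `a'/b'` with `a' ≤ a` and `b' ≤ b`, and grafting is injective
once the degree of the grafted tree is fixed, which moves preserve.
-/

namespace PBT

theorem move.deg_eq {x y : PBT} (h : move x y) : y.deg = x.deg := by
  induction h with
  | rot a b c => simp only [deg]; ring
  | left b _ ih => simp only [deg, ih]
  | right a _ ih => simp only [deg, ih]

theorem tle.deg_eq {x y : PBT} (h : tle x y) : x.deg = y.deg := by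
  induction h with
  | refl => rfl
  | tail _ hmove ih => rw [hmove.deg_eq, ih]

theorem deg_overProd (a b : PBT) : (a.overProd b).deg = a.deg + b.deg := by
  induction b with
  | leaf => simp only [overProd, deg, add_zero]
  | node l r ihl _ => simp only [overProd, deg, ihl]; ring

theorem move.overProd_left {a a' : PBT} (b : PBT) (h : move a a') :
    move (a.overProd b) (a'.overProd b) := by
  induction b with
  | leaf => exact h
  | node _ r ihl _ => exact move.left r ihl

theorem move.overProd_right (a : PBT) {b b' : PBT} (h : move b b') :
    move (a.overProd b) (a.overProd b') := by
  induction h with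
  | rot p q r => exact move.rot (a.overProd p) q r
  | left q _ ih => exact move.left q ih
  | right p h _ => exact move.right _ h

theorem tle_overProd {a a' b b' : PBT} (ha : tle a a') (hb : tle b b') :
    tle (a.overProd b) (a'.overProd b') :=
  Relation.ReflTransGen.trans (ha.lift (overProd · b') fun _ _ h => h.overProd_left b')
    (hb.lift a.overProd fun _ _ h => h.overProd_right a)

theorem move_overProd_cases {a : PBT} : ∀ {b z : PBT}, move (a.overProd b) z →
    (∃ a', z = a'.overProd b ∧ move a a') ∨ (∃ b', z = a.overProd b' ∧ move b b')
  | leaf, z, h => Or.inl ⟨z, rfl, h⟩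
  | node l r, _, h => by
    cases h with
    | rot p q s => exact Or.inr ⟨node (node l q) s, rfl, move.rot l q s⟩
    | left _ h =>
      rcases move_overProd_cases h with ⟨a', rfl, ha⟩ | ⟨l', rfl, hl⟩
      · exact Or.inl ⟨a', rfl, ha⟩
      · exact Or.inr ⟨node l' r, rfl, move.left r hl⟩
    | right _ h => exact Or.inr ⟨node l _, rfl, move.right l h⟩

theorem exists_overProd_of_tle_overProd {x y z : PBT} (h : tle z (x.overProd y)) :
    ∃ a b, z = a.overProd b ∧ tle a x ∧ tle b y := by
  induction h with
  | refl => exact ⟨x, y, rfl, .refl, .refl⟩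
  | tail _ hmove ih =>
    obtain ⟨a, b, rfl, ha, hb⟩ := ih
    rcases move_overProd_cases hmove with ⟨a', rfl, hm⟩ | ⟨b', rfl, hm⟩
    · exact ⟨a', b, rfl, ha.tail hm, hb⟩
    · exact ⟨a, b', rfl, ha, hb.tail hm⟩

theorem overProd_inj_of_deg_eq : ∀ {b b' a a' : PBT}, a.deg = a'.deg →
    a.overProd b = a'.overProd b' → a = a' ∧ b = b'
  | leaf, leaf, _, _, _, h => ⟨h, rfl⟩
  | leaf, node l' r', _, a', hdeg, h => by
    subst h
    simp only [overProd, deg, deg_overProd] at hdeg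
    omega
  | node l r, leaf, a, _, hdeg, h => by
    subst h
    simp only [overProd, deg, deg_overProd] at hdeg
    omega
  | node _ _, node _ _, _, _, hdeg, h => by
    obtain ⟨hl, rfl⟩ := node.inj h
    obtain ⟨rfl, rfl⟩ := overProd_inj_of_deg_eq hdeg hl
    exact ⟨rfl, rfl⟩

theorem tle_overProd_iff {a a' b b' : PBT} (hdeg : a.deg = a'.deg) :
    tle (a.overProd b) (a'.overProd b') ↔ tle a a' ∧ tle b b' := by
  refine ⟨fun h => ?_, fun ⟨ha, hb⟩ => tle_overProd ha hb⟩
  obtain ⟨a₀, b₀, heq, ha₀, hb₀⟩ := exists_overProd_of_tle_overProd h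
  obtain ⟨rfl, rfl⟩ := overProd_inj_of_deg_eq (hdeg.trans ha₀.deg_eq.symm) heq
  exact ⟨ha₀, hb₀⟩

end PBT

theorem stmt9_general (x y : PBT) :
    (∀ a b a' b' : PBT, PBT.tle a x → PBT.tle b y → PBT.tle a' x → PBT.tle b' y →
      (PBT.tle (a.overProd b) (a'.overProd b') ↔ PBT.tle a a' ∧ PBT.tle b b')) ∧
    (∀ z : PBT, PBT.tle z (x.overProd y) →
      ∃! p : PBT × PBT, PBT.tle p.1 x ∧ PBT.tle p.2 y ∧ z = p.1.overProd p.2) := by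
  refine ⟨fun a b a' b' hax _ ha'x _ => PBT.tle_overProd_iff (hax.deg_eq.trans ha'x.deg_eq.symm),
    fun z hz => ?_⟩
  obtain ⟨a, b, rfl, hax, hby⟩ := PBT.exists_overProd_of_tle_overProd hz
  refine ⟨(a, b), ⟨hax, hby, rfl⟩, fun ⟨a', b'⟩ ⟨ha'x, _, heq⟩ => ?_⟩
  obtain ⟨rfl, rfl⟩ :=
    PBT.overProd_inj_of_deg_eq (ha'x.deg_eq.trans hax.deg_eq.symm) heq.symm
  rfl

/-- The map `(a, b) ↦ a/b` is an order isomorphism from the product of Tamari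
intervals `[0̂, x] × [0̂, y]` onto the Tamari interval `[0̂, x/y]`: it is
order-reflecting in both directions, and every `z ≤ x/y` is uniquely of the
form `a/b` with `a ≤ x` and `b ≤ y`. -/
theorem stmt9 (m n : ℕ) (x y : PBT) (hx : x.deg = m) (hy : y.deg = n) :
    (∀ a b a' b' : PBT, PBT.tle a x → PBT.tle b y → PBT.tle a' x → PBT.tle b' y →
      (PBT.tle (a.overProd b) (a'.overProd b') ↔ PBT.tle a a' ∧ PBT.tle b b')) ∧
    (∀ z : PBT, PBT.tle z (x.overProd y) →
      ∃! p : PBT × PBT, PBT.tle p.1 x ∧ PBT.tle p.2 y ∧ z = p.1.overProd p.2) :=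
  stmt9_general x y
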